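/- Let a > 0 and κ = a². Then the real-linear map φ : 𝔤(κ) → su(3) × ℂ³ defined by φ(x,y,S,w) = (12a³·(i·S) + ★⁻¹(w + 3a²·y), −2a²·y + i·a·x), where real vectors and matrices are regarded as complex ones, is bijective and satisfies φ([u,v]) = [φ(u), φ(v)] for all u, v ∈ 𝔤(κ), where the target carries the bracket of 𝔤₂ᶜ. Hence, for κ > 0, 𝔤(κ) is isomorphic to the compact real form 𝔤₂ᶜ of the exceptional Lie algebra 𝔤₂. -/

import Mathlib

open Matrix

/-- The cross product on `ℝ³`. -/
def cross (x y : Fin 3 → ℝ) : Fin 3 → ℝ :=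
  ![x 1 * y 2 - x 2 * y 1, x 2 * y 0 - x 0 * y 2, x 0 * y 1 - x 1 * y 0]

abbrev V3 := Fin 3 → ℝ

/-- The hat map `★⁻¹ : ℝ³ → so(3)`, with `(★⁻¹ v) u = v × u`. -/
def hat (v : V3) : Matrix (Fin 3) (Fin 3) ℝ :=
  Matrix.of ![![0, -v 2, v 1], ![v 2, 0, -v 0], ![-v 1, v 0, 0]]

/-- The map `★`, inverse of the hat map. -/
def starM (A : Matrix (Fin 3) (Fin 3) ℝ) : V3 := ![A 2 1, A 0 2, A 1 0]

/-- The symmetrized traceless product `x ⊙ y`. -/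
noncomputable def odot (x y : V3) : Matrix (Fin 3) (Fin 3) ℝ :=
  (1/2 : ℝ) • (vecMulVec y x + vecMulVec x y) - ((x ⬝ᵥ y) / 3) • (1 : Matrix (Fin 3) (Fin 3) ℝ)

/-- The matrix commutator. -/
def mcomm (A B : Matrix (Fin 3) (Fin 3) ℝ) : Matrix (Fin 3) (Fin 3) ℝ := A * B - B * A

/-- The underlying space `ℝ³ × ℝ³ × 𝔰 × ℝ³` (with `𝔰` realized inside all 3×3 matrices). -/
abbrev A14 := V3 × V3 × Matrix (Fin 3) (Fin 3) ℝ × V3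

/-- Membership of an element of `A14` in `𝔤(κ) = ℝ³ × ℝ³ × 𝔰 × ℝ³`: the third component
must be symmetric and traceless. -/
def inA (u : A14) : Prop := u.2.2.1ᵀ = u.2.2.1 ∧ u.2.2.1.trace = 0

/-- The bracket of `𝔤(κ)`, the Lie algebra of the isometry group of the sub-Riemannian
model space `𝖠₃,₃(κ)`. -/
noncomputable def aBracket (κ : ℝ) (u v : A14) : A14 :=
  let x₁ := u.1; let y₁ := u.2.1; let S₁ := u.2.2.1; let w₁ := u.2.2.2
  let x₂ := v.1; let y₂ := v.2.1; let S₂ := v.2.2.1; let w₂ := v.2.2.2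
  ( (7 * κ) • (cross x₁ y₂ + cross y₁ x₂) + (24 * κ ^ 2) • (S₂.mulVec y₁ - S₁.mulVec y₂)
      + cross x₁ w₂ + cross w₁ x₂,
    cross x₁ x₂ + (2 * κ) • cross y₁ y₂ + (6 * κ) • (S₁.mulVec x₂ - S₂.mulVec x₁)
      + cross y₁ w₂ + cross w₁ y₂,
    odot x₁ y₂ - odot y₁ x₂ + (3 * κ) • (mcomm (hat y₁) S₂ - mcomm (hat y₂) S₁)
      + mcomm S₁ (hat w₂) - mcomm S₂ (hat w₁),
    (15 * κ ^ 2) • cross y₁ y₂ - (144 * κ ^ 3) • starM (mcomm S₁ S₂)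
      + (18 * κ ^ 2) • (S₂.mulVec x₁ - S₁.mulVec x₂) + cross w₁ w₂ )

/-- The ℂ-bilinear extension of the cross product to `ℂ³`. -/
def crossC (x y : Fin 3 → ℂ) : Fin 3 → ℂ :=
  ![x 1 * y 2 - x 2 * y 1, x 2 * y 0 - x 0 * y 2, x 0 * y 1 - x 1 * y 0]

/-- The bracket of `𝔤₂ᶜ` on `su(3) × ℂ³` (written on all of `Matrix(3,3,ℂ) × ℂ³`):
`[(A₁,v₁),(A₂,v₂)] = (A₁A₂ − A₂A₁ + 3(v₂v₁* − v₁v₂*) − (v₁*v₂ − v₂*v₁)·I₃,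
A₁v₂ − A₂v₁ + 2·(conj v₁) × (conj v₂))`. -/
noncomputable def g2cBracket (u v : Matrix (Fin 3) (Fin 3) ℂ × (Fin 3 → ℂ)) :
    Matrix (Fin 3) (Fin 3) ℂ × (Fin 3 → ℂ) :=
  ( u.1 * v.1 - v.1 * u.1
      + (3 : ℂ) • (vecMulVec v.2 (star u.2) - vecMulVec u.2 (star v.2))
      - ((star u.2 ⬝ᵥ v.2) - (star v.2 ⬝ᵥ u.2)) • (1 : Matrix (Fin 3) (Fin 3) ℂ),
    u.1.mulVec v.2 - v.1.mulVec u.2 + (2 : ℂ) • crossC (star u.2) (star v.2) )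

/-- A real vector regarded as an element of `ℂ³`. -/
def cv (x : V3) : Fin 3 → ℂ := fun i => (x i : ℂ)

/-- A real matrix regarded as a complex matrix. -/
def cM (S : Matrix (Fin 3) (Fin 3) ℝ) : Matrix (Fin 3) (Fin 3) ℂ :=
  S.map Complex.ofReal

/-- The complex hat map `★⁻¹ : ℂ³ → Matrix(3,3,ℂ)`. -/
def hatC (v : Fin 3 → ℂ) : Matrix (Fin 3) (Fin 3) ℂ :=
  Matrix.of ![![0, -v 2, v 1], ![v 2, 0, -v 0], ![-v 1, v 0, 0]]

/-- The map `φ : 𝔤(a²) → su(3) × ℂ³`,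
`φ(x,y,S,w) = (12a³·(i·S) + ★⁻¹(w + 3a²·y), −2a²·y + i·a·x)`. -/
noncomputable def phi17 (a : ℝ) (u : A14) : Matrix (Fin 3) (Fin 3) ℂ × (Fin 3 → ℂ) :=
  ( ((12 * a ^ 3 : ℝ) : ℂ) • (Complex.I • cM u.2.2.1) + hatC (cv (u.2.2.2 + (3 * a ^ 2) • u.2.1)),
    ((-(2 * a ^ 2) : ℝ) : ℂ) • cv u.2.1 + (Complex.I * (a : ℂ)) • cv u.1 )

/-!
The map `φ` is invertible because its real and imaginary parts return the data separately:
`Im φ₂ = a x`, `Re φ₂ = -2a² y`, `Im φ₁ = 12a³ S` and `Re φ₁ = ★⁻¹(w + 3a² y)`. Moreover `φ₁` is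
anti-Hermitian and traceless exactly when `S` is symmetric and traceless, since `★⁻¹` takes values
in the skew-symmetric matrices. The bracket relation is a polynomial identity in the coordinates
of `u` and `v`; it is checked entrywise on real and imaginary parts after writing `S₁` and `S₂`
through their five free entries.
-/

lemma hatC_cv (v : V3) : hatC (cv v) = (hat v).map Complex.ofReal := by
  ext i j
  fin_cases i <;> fin_cases j <;> simp [hatC, hat, cv]

lemma hat_transpose (v : V3) : (hat v)ᵀ = -hat v := by
  ext i j
  fin_cases i <;> fin_cases j <;> simp [hat]

lemma starM_hat (v : V3) : starM (hat v) = v := by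
  ext i
  fin_cases i <;> simp [starM, hat]

lemma hat_starM {A : Matrix (Fin 3) (Fin 3) ℝ} (hA : Aᵀ = -A) : hat (starM A) = A := by
  have h : ∀ i j, A j i = -A i j := fun i j => by simpa using congrFun (congrFun hA i) j
  ext i j
  fin_cases i <;> fin_cases j <;> simp [hat, starM] <;>
    linarith [h 0 0, h 1 1, h 2 2, h 0 1, h 0 2, h 1 2]

lemma exists_eq_of_transpose_eq_of_trace_eq_zero {R : Type*} [AddCommGroup R]
    {S : Matrix (Fin 3) (Fin 3) R} (hS : Sᵀ = S) (htr : S.trace = 0) :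
    ∃ p q r s t : R, S = !![p, q, r; q, s, t; r, t, -p - s] := by
  have h : ∀ i j, S j i = S i j := fun i j => congrFun (congrFun hS i) j
  have h22 : S 2 2 = -S 0 0 - S 1 1 := by
    rw [Matrix.trace_fin_three] at htr
    calc S 2 2 = S 2 2 - (S 0 0 + S 1 1 + S 2 2) := by rw [htr, sub_zero]
      _ = -S 0 0 - S 1 1 := by abel
  refine ⟨S 0 0, S 0 1, S 0 2, S 1 1, S 1 2, ?_⟩
  ext i j
  fin_cases i <;> fin_cases j <;> simp [h22] <;> exact h _ _

lemma mulVec_fin_three_apply {R : Type*} [NonUnitalNonAssocSemiring R]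
    (A : Matrix (Fin 3) (Fin 3) R) (v : Fin 3 → R) (i : Fin 3) :
    (A *ᵥ v) i = A i 0 * v 0 + A i 1 * v 1 + A i 2 * v 2 := by
  simp [Matrix.mulVec, dotProduct, Fin.sum_univ_three]

section SkewHermitian

variable {n : Type*} {P : Matrix n n ℂ}

lemma map_re_transpose_of_conjTranspose_eq_neg (hP : Pᴴ = -P) :
    (P.map Complex.re)ᵀ = -P.map Complex.re := by
  ext i j
  simpa using congrArg Complex.re (congrFun (congrFun hP i) j)

lemma map_im_transpose_of_conjTranspose_eq_neg (hP : Pᴴ = -P) :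
    (P.map Complex.im)ᵀ = P.map Complex.im := by
  ext i j
  simpa using congrArg Complex.im (congrFun (congrFun hP i) j)

end SkewHermitian

section Components

variable (a : ℝ) (u : A14) (i j : Fin 3)

@[simp] lemma re_phi17_fst :
    ((phi17 a u).1 i j).re = hat (u.2.2.2 + (3 * a ^ 2) • u.2.1) i j := by
  simp [phi17, hatC_cv, cM, -Complex.ofReal_mul, -Complex.ofReal_pow]

@[simp] lemma im_phi17_fst : ((phi17 a u).1 i j).im = 12 * a ^ 3 * u.2.2.1 i j := by
  simp [phi17, hatC_cv, cM, -Complex.ofReal_mul, -Complex.ofReal_pow]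

@[simp] lemma re_phi17_snd : ((phi17 a u).2 i).re = -(2 * a ^ 2) * u.2.1 i := by
  simp [phi17, cv, -Complex.ofReal_mul, -Complex.ofReal_pow]

@[simp] lemma im_phi17_snd : ((phi17 a u).2 i).im = a * u.1 i := by
  simp [phi17, cv, -Complex.ofReal_mul, -Complex.ofReal_pow]

end Components

noncomputable def phi17Inv (a : ℝ) (p : Matrix (Fin 3) (Fin 3) ℂ × (Fin 3 → ℂ)) : A14 :=
  ( a⁻¹ • fun i => (p.2 i).im,
    (-(2 * a ^ 2)⁻¹) • fun i => (p.2 i).re,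
    (12 * a ^ 3)⁻¹ • p.1.map Complex.im,
    starM (p.1.map Complex.re) + (3 / 2 : ℝ) • fun i => (p.2 i).re )

section Bijection

variable (a : ℝ)

lemma phi17_mapsTo :
    Set.MapsTo (phi17 a) {u | inA u} {p | p.1ᴴ = -p.1 ∧ p.1.trace = 0} := by
  rintro ⟨x, y, S, w⟩ ⟨hS, htr⟩
  have hS' : ∀ i j, S j i = S i j := fun i j => congrFun (congrFun hS i) j
  refine ⟨?_, ?_⟩
  · ext i j
    apply Complex.ext
    · simpa using congrFun (congrFun (hat_transpose (w + (3 * a ^ 2) • y)) i) j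
    · simp [hS']
  · apply Complex.ext
    · simp [Matrix.trace_fin_three, hat]
    · simp [Matrix.trace_fin_three] at htr ⊢
      linear_combination 12 * a ^ 3 * htr

lemma phi17Inv_mapsTo :
    Set.MapsTo (phi17Inv a) {p | p.1ᴴ = -p.1 ∧ p.1.trace = 0} {u | inA u} := by
  rintro ⟨P, q⟩ ⟨hP, htr⟩
  refine ⟨?_, ?_⟩
  · simp [phi17Inv, Matrix.transpose_smul, map_im_transpose_of_conjTranspose_eq_neg hP]
  · have him := congrArg Complex.im htr
    simp only [Matrix.trace_fin_three, Complex.add_im, Complex.zero_im] at him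
    simp [phi17Inv, Matrix.trace_fin_three, him]

variable {a}

lemma phi17Inv_phi17 (ha : a ≠ 0) (u : A14) : phi17Inv a (phi17 a u) = u := by
  obtain ⟨x, y, S, w⟩ := u
  have hre : (phi17 a (x, y, S, w)).1.map Complex.re = hat (w + (3 * a ^ 2) • y) := by
    ext i j
    simp
  refine Prod.ext ?_ (Prod.ext ?_ (Prod.ext ?_ ?_))
  · ext i; simp [phi17Inv]; field_simp
  · ext i; simp [phi17Inv]; field_simp
  · ext i j; simp [phi17Inv]; field_simp
  · ext i; simp [phi17Inv, hre, starM_hat]; field_simp; ring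

lemma phi17_phi17Inv (ha : a ≠ 0) {p : Matrix (Fin 3) (Fin 3) ℂ × (Fin 3 → ℂ)}
    (hp : p.1ᴴ = -p.1) : phi17 a (phi17Inv a p) = p := by
  obtain ⟨P, q⟩ := p
  have hw : (phi17Inv a (P, q)).2.2.2 + (3 * a ^ 2) • (phi17Inv a (P, q)).2.1 =
      starM (P.map Complex.re) := by
    ext i; simp [phi17Inv]; field_simp; ring
  refine Prod.ext ?_ ?_
  · ext i j
    apply Complex.ext
    · simp [hw, hat_starM (map_re_transpose_of_conjTranspose_eq_neg hp)]
    · simp [phi17Inv]; field_simp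
  · ext i
    apply Complex.ext
    · simp [phi17Inv]; field_simp
    · simp [phi17Inv]; field_simp

end Bijection

section Bracket

variable (a : ℝ) {u v : A14}

set_option maxHeartbeats 1000000 in
lemma phi17_aBracket_fst (hu : inA u) (hv : inA v) :
    (phi17 a (aBracket (a ^ 2) u v)).1 = (g2cBracket (phi17 a u) (phi17 a v)).1 := by
  obtain ⟨x₁, y₁, S₁, w₁⟩ := u
  obtain ⟨x₂, y₂, S₂, w₂⟩ := v
  obtain ⟨p₁, q₁, r₁, s₁, t₁, rfl⟩ := exists_eq_of_transpose_eq_of_trace_eq_zero hu.1 hu.2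
  obtain ⟨p₂, q₂, r₂, s₂, t₂, rfl⟩ := exists_eq_of_transpose_eq_of_trace_eq_zero hv.1 hv.2
  ext i j
  apply Complex.ext <;> fin_cases i <;> fin_cases j <;>
  · simp only [aBracket, g2cBracket, re_phi17_fst, im_phi17_fst, Matrix.add_apply,
      Matrix.sub_apply, Matrix.smul_apply, Matrix.mul_apply, Fin.sum_univ_three]
    simp [hat, cross, starM, odot, mcomm, Matrix.vecMulVec_apply, dotProduct, Fin.sum_univ_three]
    ring

lemma phi17_aBracket_snd (hu : inA u) (hv : inA v) :
    (phi17 a (aBracket (a ^ 2) u v)).2 = (g2cBracket (phi17 a u) (phi17 a v)).2 := by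
  obtain ⟨x₁, y₁, S₁, w₁⟩ := u
  obtain ⟨x₂, y₂, S₂, w₂⟩ := v
  obtain ⟨p₁, q₁, r₁, s₁, t₁, rfl⟩ := exists_eq_of_transpose_eq_of_trace_eq_zero hu.1 hu.2
  obtain ⟨p₂, q₂, r₂, s₂, t₂, rfl⟩ := exists_eq_of_transpose_eq_of_trace_eq_zero hv.1 hv.2
  ext i
  apply Complex.ext <;> fin_cases i <;>
  · simp only [aBracket, g2cBracket, re_phi17_snd, im_phi17_snd, Pi.add_apply, Pi.sub_apply,
      Pi.smul_apply, mulVec_fin_three_apply]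
    simp [hat, cross, crossC]
    ring

lemma phi17_aBracket (hu : inA u) (hv : inA v) :
    phi17 a (aBracket (a ^ 2) u v) = g2cBracket (phi17 a u) (phi17 a v) :=
  Prod.ext (phi17_aBracket_fst a hu hv) (phi17_aBracket_snd a hu hv)

end Bracket

/-- For `a > 0` and `κ = a²`, the map `φ` is a bijection from `𝔤(κ)` onto `su(3) × ℂ³`
intertwining the bracket of `𝔤(κ)` with that of `𝔤₂ᶜ`: for `κ > 0`, `𝔤(κ)` is isomorphic
to the compact real form `𝔤₂ᶜ` of the exceptional Lie algebra `𝔤₂`. -/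
theorem stmt_17 (a : ℝ) (ha : 0 < a) :
    Set.BijOn (phi17 a) {u : A14 | inA u}
      {p : Matrix (Fin 3) (Fin 3) ℂ × (Fin 3 → ℂ) | p.1ᴴ = -p.1 ∧ p.1.trace = 0}
    ∧ ∀ u v : A14, inA u → inA v →
        phi17 a (aBracket (a ^ 2) u v) = g2cBracket (phi17 a u) (phi17 a v) := by
  refine ⟨Set.InvOn.bijOn ⟨?_, ?_⟩ (phi17_mapsTo a) (phi17Inv_mapsTo a),
    fun u v hu hv => phi17_aBracket a hu hv⟩
  · exact fun u _ => phi17Inv_phi17 ha.ne' u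
  · exact fun p hp => phi17_phi17Inv ha.ne' hp.1
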